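/- arXiv:2408.16819 — 2 statements merged into one kernel-verified Lean document; each statement's English description precedes it below -/
import Mathlib

section
/- Star tree edge sums are integer linear combinations of the edge sums of any tree: with the setup of antisymmetric γ_{ij} and Γ_e as above, let T' be the star tree on {1,…,n} with center n, so Γ'_{e_i} = Σ_{j=1}^n γ_{ij} for i=1,…,n−1. For any unrooted labelled tree T on {1,…,n}, define M_{ie} = +1 if vertex i is the source of edge e, −1 if it is the target, 0 otherwise. Then Γ'_{e_i} = Σ_{e ∈ E_T} M_{ie} Γ_e for every i. -/
open scoped Classical

/-- For an antisymmetric array `γ` and a graph `T` on `Fin n`, the edge sum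
`Γ_e = Σ_{k ∈ V(T_e^s)} Σ_{l ∈ V(T_e^t)} γ k l` attached to the (oriented) edge
`e = (i,j)`: here `T_e^s` and `T_e^t` are the two connected components of `T` with the
edge `{i,j}` removed, containing `i` and `j` respectively. -/
noncomputable def edgeSum {n : ℕ} (γ : Fin n → Fin n → ℝ) (T : SimpleGraph (Fin n))
    (i j : Fin n) : ℝ :=
  ∑ k, ∑ l,
    if (T.deleteEdges {s(i, j)}).Reachable k i ∧ (T.deleteEdges {s(i, j)}).Reachable l j
    then γ k l else 0

def starTree (n : ℕ) : SimpleGraph (Fin (n + 1)) :=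
  SimpleGraph.fromRel fun _ j => j = Fin.last n

/-!
By antisymmetry of `γ`, the edge sum `Γ_(i,j)` of a tree edge is the sum of the row sums
`r a = Σ_b γ a b` over the component of `i` in `T - ij`, and reversing an edge negates its
edge sum. Hence `Σ_e M_{ie} Γ_e` is the sum of `Γ_(i,j)` over the neighbours `j` of `i`, which
is minus the sum of `r a` over the components of `T - i`. These partition the vertices other
than `i`, and `Σ_a r a = 0`, so the result is `r i`; for the star tree, whose edge at `i` cuts
off `{i}` alone, this is also `Γ'_{e_i}`.
-/

namespace SimpleGraph

variable {V : Type*} {G : SimpleGraph V}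

lemma IsAcyclic.not_reachable_deleteEdges (hG : G.IsAcyclic) {u v : V} (h : G.Adj u v) :
    ¬ (G.deleteEdges {s(u, v)}).Reachable u v :=
  isBridge_iff.mp (isAcyclic_iff_forall_adj_isBridge.mp hG h)

lemma Preconnected.exists_adj_reachable_deleteEdges (hG : G.Preconnected) {i a : V}
    (h : a ≠ i) :
    ∃ j₀, G.Adj i j₀ ∧ (G.deleteEdges {s(i, j₀)}).Reachable a j₀ ∧
      ∀ j ≠ j₀, (G.deleteEdges {s(i, j)}).Reachable a i := by
  obtain ⟨p, hp⟩ := hG.exists_isPath i a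
  cases p with
  | nil => exact absurd rfl h
  | @cons _ j₀ _ hadj q =>
    have hq : ∀ j, s(i, j) ∉ q.edges := fun j hj =>
      ((Walk.cons_isPath_iff hadj q).mp hp).2 (q.fst_mem_support_of_mem_edges hj)
    refine ⟨j₀, hadj, ?_, fun j hj => ?_⟩
    · exact reachable_deleteEdges_iff_exists_walk.mpr ⟨q.reverse, by simpa using hq j₀⟩
    · refine reachable_deleteEdges_iff_exists_walk.mpr ⟨(Walk.cons hadj q).reverse, ?_⟩
      simpa [Walk.edges_cons, hj, hadj.ne] using hq j

lemma IsTree.reachable_deleteEdges_iff_not (hG : G.IsTree) {u v : V} (h : G.Adj u v) (a : V) :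
    (G.deleteEdges {s(u, v)}).Reachable a v ↔ ¬ (G.deleteEdges {s(u, v)}).Reachable a u := by
  refine ⟨fun hv hu => hG.isAcyclic.not_reachable_deleteEdges h (hu.symm.trans hv), fun hu => ?_⟩
  obtain ⟨j₀, -, hj₀, hsplit⟩ := hG.connected.preconnected.exists_adj_reachable_deleteEdges
    (fun hau : a = u => hu (hau ▸ Reachable.refl a))
  by_cases hv : v = j₀
  · exact hv ▸ hj₀
  · exact absurd (hsplit v hv) hu

lemma IsTree.existsUnique_adj_reachable_deleteEdges (hG : G.IsTree) {i a : V} (h : a ≠ i) :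
    ∃! j, G.Adj i j ∧ (G.deleteEdges {s(i, j)}).Reachable a j := by
  obtain ⟨j₀, hadj, hj₀, hsplit⟩ := hG.connected.preconnected.exists_adj_reachable_deleteEdges h
  refine ⟨j₀, ⟨hadj, hj₀⟩, fun j ⟨hij, hj⟩ => ?_⟩
  by_contra hne
  exact hG.isAcyclic.not_reachable_deleteEdges hij ((hsplit j hne).symm.trans hj)

end SimpleGraph

section Antisymmetric

variable {V : Type*} {γ : V → V → ℝ}

lemma Finset.sum_sum_eq_zero_of_antisymm (hγ : ∀ i j, γ i j = -γ j i) (s : Finset V) :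
    ∑ a ∈ s, ∑ b ∈ s, γ a b = 0 := by
  have h : ∑ a ∈ s, ∑ b ∈ s, γ a b = -∑ a ∈ s, ∑ b ∈ s, γ a b := by
    conv_lhs => rw [Finset.sum_comm]
    rw [← Finset.sum_neg_distrib]
    exact Finset.sum_congr rfl fun b _ => by
      rw [← Finset.sum_neg_distrib]
      exact Finset.sum_congr rfl fun a _ => hγ a b
  linarith

lemma Finset.sum_sum_compl_eq_of_antisymm [Fintype V] [DecidableEq V]
    (hγ : ∀ i j, γ i j = -γ j i) (s : Finset V) :
    ∑ a ∈ s, ∑ b ∈ sᶜ, γ a b = ∑ a ∈ s, ∑ b, γ a b := by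
  simp only [← Finset.sum_add_sum_compl s (γ _), Finset.sum_add_distrib,
    s.sum_sum_eq_zero_of_antisymm hγ, zero_add]

lemma sum_sum_incidence_mul_eq_sum_incident [Fintype V] [DecidableEq V] {E : V → V → Prop}
    (hE : ∀ i j, E i j → ¬ E j i) {f : V → V → ℝ} (hf : ∀ i j, f j i = -f i j) (i : V) :
    ∑ k, ∑ l, (if E k l then (if i = k then (1 : ℝ) else if i = l then -1 else 0) * f k l
      else 0) = ∑ j, if E i j ∨ E j i then f i j else 0 := by
  have hsplit : ∀ k l, (if E k l then (if i = k then (1 : ℝ) else if i = l then -1 else 0) *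
      f k l else 0) = (if k = i then (if E i l then f i l else 0) else 0) +
        (if l = i then (if E k i then f i k else 0) else 0) := by
    intro k l
    by_cases hk : k = i <;> by_cases hl : l = i
    · have hii : ¬ E i i := fun h => hE i i h h
      simp [hk, hl, hii]
    · simp [hk, hl]
    · simp [hk, hl, Ne.symm hk, hf i k]
    · simp [hk, hl, Ne.symm hk, Ne.symm hl]
  simp only [hsplit, Finset.sum_add_distrib, Finset.sum_ite_irrel, Finset.sum_const_zero,
    Finset.sum_ite_eq', Finset.mem_univ, if_true]
  rw [← Finset.sum_add_distrib]
  refine Finset.sum_congr rfl fun j _ => ?_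
  by_cases hij : E i j
  · simp [hij, hE i j hij]
  · simp [hij]

end Antisymmetric

section EdgeSum

variable {n : ℕ} {γ : Fin n → Fin n → ℝ}

lemma edgeSum_swap (hγ : ∀ i j, γ i j = -γ j i) (T : SimpleGraph (Fin n)) (i j : Fin n) :
    edgeSum γ T j i = -edgeSum γ T i j := by
  rw [edgeSum, edgeSum, Sym2.eq_swap, Finset.sum_comm, ← Finset.sum_neg_distrib]
  refine Finset.sum_congr rfl fun l _ => ?_
  rw [← Finset.sum_neg_distrib]
  refine Finset.sum_congr rfl fun k _ => ?_
  rw [hγ k l]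
  by_cases hk : (T.deleteEdges {s(i, j)}).Reachable k j <;>
    by_cases hl : (T.deleteEdges {s(i, j)}).Reachable l i <;> simp [hk, hl]

lemma edgeSum_eq_sum_of_reachable_iff (hγ : ∀ i j, γ i j = -γ j i) {T : SimpleGraph (Fin n)}
    {i j : Fin n}
    (hcompl : ∀ a, (T.deleteEdges {s(i, j)}).Reachable a j ↔
      ¬ (T.deleteEdges {s(i, j)}).Reachable a i) :
    edgeSum γ T i j = ∑ a ∈ {a | (T.deleteEdges {s(i, j)}).Reachable a i}, ∑ b, γ a b := by
  rw [edgeSum, ← Finset.sum_sum_compl_eq_of_antisymm hγ]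
  simp only [hcompl, ite_and, Finset.sum_filter, Finset.compl_filter, Finset.sum_ite_irrel,
    Finset.sum_const_zero]

lemma SimpleGraph.IsTree.edgeSum_eq_sum (hγ : ∀ i j, γ i j = -γ j i) {T : SimpleGraph (Fin n)}
    (hT : T.IsTree) {i j : Fin n} (h : T.Adj i j) :
    edgeSum γ T i j = ∑ a ∈ {a | (T.deleteEdges {s(i, j)}).Reachable a i}, ∑ b, γ a b :=
  edgeSum_eq_sum_of_reachable_iff hγ (hT.reachable_deleteEdges_iff_not h)

lemma SimpleGraph.IsTree.sum_adj_edgeSum (hγ : ∀ i j, γ i j = -γ j i) {T : SimpleGraph (Fin n)}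
    (hT : T.IsTree) (i : Fin n) :
    ∑ j, (if T.Adj i j then edgeSum γ T i j else 0) = ∑ b, γ i b := by
  have hcount : ∀ a, ∑ j, (if T.Adj i j ∧ (T.deleteEdges {s(i, j)}).Reachable a j
      then ∑ b, γ a b else 0) = if a = i then 0 else ∑ b, γ a b := by
    intro a
    by_cases ha : a = i
    · subst ha
      exact (Finset.sum_eq_zero fun j _ =>
        if_neg fun h => hT.isAcyclic.not_reachable_deleteEdges h.1 h.2).trans (if_pos rfl).symm
    · obtain ⟨j₀, hj₀, huniq⟩ := hT.existsUnique_adj_reachable_deleteEdges ha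
      rw [Finset.sum_eq_single j₀ (fun j _ hj => if_neg fun h => hj (huniq j h)) (by simp),
        if_pos hj₀, if_neg ha]
  calc ∑ j, (if T.Adj i j then edgeSum γ T i j else 0)
      = -∑ j, if T.Adj i j then edgeSum γ T j i else 0 := by
        rw [← Finset.sum_neg_distrib]
        refine Finset.sum_congr rfl fun j _ => ?_
        split_ifs <;> simp [edgeSum_swap hγ T i j]
    _ = -∑ j, ∑ a, if T.Adj i j ∧ (T.deleteEdges {s(i, j)}).Reachable a j
          then ∑ b, γ a b else 0 := by
        congr 1
        refine Finset.sum_congr rfl fun j _ => ?_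
        by_cases h : T.Adj i j
        · rw [if_pos h, hT.edgeSum_eq_sum hγ h.symm, Sym2.eq_swap, Finset.sum_filter]
          simp [h]
        · simp [h]
    _ = -∑ a, if a = i then 0 else ∑ b, γ a b := by
        rw [Finset.sum_comm]
        simp only [hcount]
    _ = ∑ b, γ i b := by
        simpa [Finset.sum_ite, Finset.filter_ne'] using
          Finset.sum_sum_eq_zero_of_antisymm hγ Finset.univ

end EdgeSum

section StarTree

variable {n : ℕ}

lemma starTree_deleteEdges_reachable_iff {i : Fin (n + 1)} (hi : i ≠ Fin.last n)
    (a : Fin (n + 1)) :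
    ((starTree n).deleteEdges {s(i, Fin.last n)}).Reachable a i ↔ a = i := by
  refine ⟨fun h => ?_, fun h => h ▸ SimpleGraph.Reachable.refl a⟩
  obtain ⟨w⟩ := h.symm
  cases w with
  | nil => rfl
  | cons h _ =>
    simp only [starTree, SimpleGraph.deleteEdges_adj, SimpleGraph.fromRel_adj, hi, or_false,
      Set.mem_singleton_iff, Sym2.eq_iff, true_and] at h
    exact absurd (Or.inl h.1.2) h.2

lemma starTree_deleteEdges_reachable_last_iff {i : Fin (n + 1)} (hi : i ≠ Fin.last n)
    (a : Fin (n + 1)) :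
    ((starTree n).deleteEdges {s(i, Fin.last n)}).Reachable a (Fin.last n) ↔ a ≠ i := by
  refine ⟨fun h hai => hi ?_, fun hai => ?_⟩
  · exact ((starTree_deleteEdges_reachable_iff hi _).mp (hai ▸ h).symm).symm
  by_cases hlast : a = Fin.last n
  · exact hlast ▸ SimpleGraph.Reachable.refl a
  · refine SimpleGraph.Adj.reachable ?_
    simp [starTree, hlast, hai]

lemma edgeSum_starTree {γ : Fin (n + 1) → Fin (n + 1) → ℝ} (hγ : ∀ i j, γ i j = -γ j i)
    {i : Fin (n + 1)} (hi : i ≠ Fin.last n) :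
    edgeSum γ (starTree n) i (Fin.last n) = ∑ j, γ i j := by
  rw [edgeSum_eq_sum_of_reachable_iff hγ fun a => by
    rw [starTree_deleteEdges_reachable_last_iff hi, starTree_deleteEdges_reachable_iff hi]]
  simp [starTree_deleteEdges_reachable_iff hi, Finset.filter_eq']

end StarTree

/-- Star tree edge sums are integer linear combinations of the edge sums of any tree:
let `γ` be antisymmetric, `T'` the star tree with center `n` (so that its edge sums are
`Γ'_{e_i} = Σ_j γ i j`), `T` any tree on the same vertices with orientation `E`, and
`M_{ie} = +1/−1/0` according to whether vertex `i` is the source/target of the edge `e`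
or not incident to it.  Then `Γ'_{e_i} = Σ_{e ∈ E_T} M_{ie} Γ_e` for every vertex
`i ≠ n`. -/
theorem star_edgeSum_eq_lin_comb (n : ℕ) (γ : Fin (n + 1) → Fin (n + 1) → ℝ)
    (hγ : ∀ i j, γ i j = - γ j i)
    (T : SimpleGraph (Fin (n + 1))) (hT : T.IsTree)
    (E : Fin (n + 1) → Fin (n + 1) → Prop)
    (hE : ∀ i j, T.Adj i j ↔ (E i j ∨ E j i))
    (hE' : ∀ i j, E i j → ¬ E j i) :
    ∀ i : Fin (n + 1), i ≠ Fin.last n →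
      (edgeSum γ (starTree n) i (Fin.last n) = ∑ j, γ i j ∧
       edgeSum γ (starTree n) i (Fin.last n) =
         ∑ k, ∑ l, if E k l then
           (if i = k then (1 : ℝ) else if i = l then -1 else 0) * edgeSum γ T k l
         else 0) := by
  intro i hi
  have hstar := edgeSum_starTree hγ hi
  refine ⟨hstar, ?_⟩
  rw [hstar, sum_sum_incidence_mul_eq_sum_incident hE' (edgeSum_swap hγ T) i]
  simp only [← hE]
  exact (hT.sum_adj_edgeSum hγ i).symm
end

section
/- The coefficients e_T defined by the recursion e_T = − Σ_{m=1}^{n_T−1} Σ_{∪ₖ Tₖ ≃ T} e_{T/{Tₖ}} ∏ₖ a_{Tₖ} (sum over decompositions of T into m ≥ 1 but fewer than n_T non-intersecting subtrees, with T/{Tₖ} the tree obtained by collapsing each subtree to a vertex), together with e_• = 1, vanish for every tree T with an even number of vertices. -/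
open scoped Classical

/-- An (oriented, labelled) graph on a finite set of natural-number vertices,
given by its vertex set and an oriented edge relation. -/
structure DiGraph where
  verts : Finset ℕ
  E : ℕ → ℕ → Prop

namespace DiGraph

/-- The underlying (unoriented) simple graph on the vertex set. -/
def symGraph (G : DiGraph) : SimpleGraph {x : ℕ // x ∈ G.verts} where
  Adj a b := (G.E a.1 b.1 ∨ G.E b.1 a.1) ∧ a ≠ b
  symm := ⟨fun a b h => ⟨h.1.symm, h.2.symm⟩⟩
  loopless := ⟨fun a h => h.2 rfl⟩

/-- `G` is an oriented unrooted labelled tree: its edges join vertices of `G`,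
no edge occurs in both orientations, and the underlying simple graph is a tree. -/
def IsOTree (G : DiGraph) : Prop :=
  (∀ i j, G.E i j → i ∈ G.verts ∧ j ∈ G.verts) ∧
  (∀ i j, G.E i j → ¬ G.E j i) ∧
  G.symGraph.IsTree

/-- The number `n_v⁺` of edges oriented into the vertex `v`. -/
noncomputable def inDeg (G : DiGraph) (v : ℕ) : ℕ :=
  (G.verts.filter fun w => G.E w v).card

/-- The graph obtained by deleting the vertex `v`. -/
def delV (G : DiGraph) (v : ℕ) : DiGraph :=
  ⟨G.verts.erase v, fun i j => G.E i j ∧ i ≠ v ∧ j ≠ v⟩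

/-- The subgraph induced on a set `s` of vertices. -/
def induce (G : DiGraph) (s : Finset ℕ) : DiGraph :=
  ⟨s, fun i j => G.E i j ∧ i ∈ s ∧ j ∈ s⟩

/-- The vertex set of a connected component of (the underlying graph of) `G`. -/
noncomputable def compVerts (G : DiGraph) (c : G.symGraph.ConnectedComponent) : Finset ℕ :=
  G.verts.filter fun x => ∃ h : x ∈ G.verts, G.symGraph.connectedComponentMk ⟨x, h⟩ = c

/-- The subgraph of `G` given by a connected component. -/
noncomputable def component (G : DiGraph) (c : G.symGraph.ConnectedComponent) : DiGraph :=
  G.induce (G.compVerts c)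

/-- `a : DiGraph → ℚ` satisfies the defining recursion of the tree coefficients `a_T`:
`a_• = 1` for the one-vertex tree, and for a tree `T` with at least two vertices
`a_T = (1/n_T) Σ_{v ∈ V_T} (−1)^{n_v⁺} ∏_s a_{T_s(v)}`,
the product running over the connected components of `T` with the vertex `v` deleted. -/
def ARec (a : DiGraph → ℚ) : Prop :=
  (∀ G : DiGraph, G.IsOTree → G.verts.card = 1 → a G = 1) ∧
  (∀ G : DiGraph, G.IsOTree → 2 ≤ G.verts.card →
    a G = (1 / (G.verts.card : ℚ)) * ∑ v ∈ G.verts, (-1 : ℚ) ^ (G.inDeg v) *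
      ∏ᶠ c : (G.delV v).symGraph.ConnectedComponent, a ((G.delV v).component c))

end DiGraph

namespace DiGraph

/-- `P` is a decomposition of the tree `G` into non-intersecting subtrees:
a partition of the vertex set of `G` into nonempty blocks, each of which induces a
(connected) subtree of `G`. -/
def IsDecomp (G : DiGraph) (P : Finset (Finset ℕ)) : Prop :=
  (∀ s ∈ P, s.Nonempty) ∧
  (∀ s ∈ P, ∀ t ∈ P, s ≠ t → Disjoint s t) ∧
  P.biUnion id = G.verts ∧
  (∀ s ∈ P, (G.induce s).IsOTree)

/-- The quotient graph `T/{Tₖ}` obtained from `G` by collapsing each block of the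
decomposition `P` to a single vertex (represented by the largest element of the block);
two blocks are joined, with the induced orientation, whenever some edge of `G` joins
them. -/
noncomputable def quotGraph (G : DiGraph) (P : Finset (Finset ℕ)) : DiGraph :=
  ⟨P.image fun s => s.sup id,
   fun b b' => b ≠ b' ∧ ∃ s ∈ P, ∃ t ∈ P, s.sup id = b ∧ t.sup id = b' ∧
     ∃ i ∈ s, ∃ j ∈ t, G.E i j⟩

/-- `e : DiGraph → ℚ` satisfies, relative to `a`, the defining recursion of the
coefficients `e_T`:  `e_• = 1` and, for a tree with at least two vertices,
`e_T = − Σ_{m=1}^{n_T−1} Σ_{∪ₖ Tₖ ≃ T} e_{T/{Tₖ}} ∏ₖ a_{Tₖ}`,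
the sum running over all decompositions of `T` into `m < n_T` non-intersecting subtrees
(equivalently, decompositions with at least one non-trivial subtree). -/
def ERec (a e : DiGraph → ℚ) : Prop :=
  (∀ G : DiGraph, G.IsOTree → G.verts.card = 1 → e G = 1) ∧
  (∀ G : DiGraph, G.IsOTree → 2 ≤ G.verts.card →
    e G = - ∑ P ∈ (G.verts.powerset.powerset).filter
        (fun P => G.IsDecomp P ∧ P.card < G.verts.card),
      e (G.quotGraph P) * ∏ s ∈ P, a (G.induce s))

end DiGraph

/-!
Let `W(s) = Σ_σ ∏_{i → j} (±1)` be the signed count of the linear orders `σ` of a vertex set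
`s`, an arc `i → j` counting `+1` when `σ` puts `i` before `j`. Splitting off the first vertex
gives the recursion of `a`, so `W(s) = #s! ∏ a_B` over the components `B` of the forest induced
on `s`; in particular `W(V_T) = n_T! a_T` for a tree `T`. Reversing `σ` flips all `n_T - 1`
arcs, so `a_T = 0` when `n_T` is even. `W` itself is never needed: any solution of the
first-vertex recursion also satisfies the last-vertex one, which is all that the reversal uses.

In the recursion for `e_T` with `n_T` even, a decomposition with a block of even size has a
vanishing factor `a`, and one with only odd blocks has an even number `m < n_T` of them; the
quotient is then a tree on `m` vertices, so `e_{T/{Tₖ}} = 0` by induction.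
-/

open Finset
open scoped Nat

lemma Finset.card_filter_product_eq_sum {α β : Type*} (s : Finset α) (t : Finset β)
    (q : α → β → Prop) [∀ x y, Decidable (q x y)] :
    #{p ∈ s ×ˢ t | q p.1 p.2} = ∑ x ∈ s, #{y ∈ t | q x y} := by
  simp only [card_filter, sum_product]

section VertexExpansion

variable {α R : Type*} [DecidableEq α] [CommRing R] {r : α → α → Prop} [DecidableRel r]
  {f : Finset α → R} {s t : Finset α}

lemma Finset.card_filter_eq_card_filter_erase_add {p : α → Prop} [DecidablePred p] {u : α}
    (hu : u ∈ s) : #{w ∈ s | p w} = #{w ∈ s.erase u | p w} + if p u then 1 else 0 := by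
  rw [filter_erase]
  split_ifs with h
  · rw [card_erase_add_one (mem_filter.2 ⟨hu, h⟩)]
  · rw [erase_eq_of_notMem (by simp [h]), add_zero]

lemma Finset.card_filter_product_self_eq_erase_add (hr : ∀ x, ¬ r x x) {v : α} (hv : v ∈ s) :
    #{p ∈ s ×ˢ s | r p.1 p.2} =
      #{p ∈ s.erase v ×ˢ s.erase v | r p.1 p.2} + #{w ∈ s | r w v} + #{w ∈ s | r v w} := by
  have hin : #{w ∈ s | r w v} = #{w ∈ s.erase v | r w v} := by
    rw [card_filter_eq_card_filter_erase_add hv, if_neg (hr v), add_zero]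
  simp only [card_filter_product_eq_sum, ← add_sum_erase s _ hv,
    sum_congr rfl fun x (_ : x ∈ s.erase v) => card_filter_eq_card_filter_erase_add (p := r x) hv,
    sum_add_distrib, hin, card_filter (r · v) (s.erase v)]
  ring

/-- The signed count of linear orders `σ` of `s`, in which an arc `i → j` of `r` weighs `1` if
`σ` puts `i` before `j` and `-1` otherwise, satisfies this recursion: condition on the first
vertex. -/
def HasFirstVertexExpansion (r : α → α → Prop) [DecidableRel r] (f : Finset α → R)
    (s : Finset α) : Prop :=
  ∀ t ⊆ s, t.Nonempty → f t = ∑ v ∈ t, (-1) ^ #{w ∈ t | r w v} * f (t.erase v)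

namespace HasFirstVertexExpansion

lemma mono (hf : HasFirstVertexExpansion r f s) (hts : t ⊆ s) :
    HasFirstVertexExpansion r f t :=
  fun u hu => hf u (hu.trans hts)

/-- Conditioning on the last vertex instead: expand twice and remove the two vertices in the
other order. -/
lemma eq_sum_last (hf : HasFirstVertexExpansion r f s) (hs : s.Nonempty) :
    f s = ∑ v ∈ s, (-1) ^ #{w ∈ s | r v w} * f (s.erase v) := by
  induction s using Finset.strongInduction with
  | H s ih =>
  obtain ⟨x, rfl⟩ | hnt := hs.exists_eq_singleton_or_nontrivial
  · simp [hf _ subset_rfl hs, filter_singleton]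
  have hne : ∀ v ∈ s, (s.erase v).Nonempty := fun v _ => hnt.erase_nonempty
  have hexp : ∀ u ∈ s, ∀ v ∈ s.erase u,
      #{w ∈ s | r w v} + #{w ∈ s.erase v | r u w} =
        #{w ∈ s | r u w} + #{w ∈ s.erase u | r w v} := by
    intro u hu v hv
    rw [card_filter_eq_card_filter_erase_add (p := (r · v)) hu,
      card_filter_eq_card_filter_erase_add (p := r u) (mem_of_mem_erase hv)]
    ring
  calc f s = ∑ v ∈ s, ∑ u ∈ s.erase v, (-1) ^ #{w ∈ s | r w v} *
        ((-1) ^ #{w ∈ s.erase v | r u w} * f ((s.erase v).erase u)) := by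
        rw [hf s subset_rfl hs]
        refine sum_congr rfl fun v hv => ?_
        rw [ih _ (erase_ssubset hv) (hf.mono (erase_subset _ _)) (hne v hv), mul_sum]
    _ = ∑ u ∈ s, ∑ v ∈ s.erase u, (-1) ^ #{w ∈ s | r u w} *
        ((-1) ^ #{w ∈ s.erase u | r w v} * f ((s.erase u).erase v)) := by
        rw [sum_comm' (t' := s) (s' := fun u => s.erase u) fun v u => by
          simp only [mem_erase]; tauto]
        refine sum_congr rfl fun u hu => sum_congr rfl fun v hv => ?_
        rw [erase_right_comm, ← mul_assoc, ← mul_assoc, ← pow_add, ← pow_add,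
          hexp u hu v hv]
    _ = ∑ u ∈ s, (-1) ^ #{w ∈ s | r u w} * f (s.erase u) := by
        refine sum_congr rfl fun u hu => ?_
        rw [hf _ (erase_subset _ _) (hne u hu), mul_sum]

/-- Reversing a linear order exchanges the two expansions and flips the sign of every arc. -/
lemma eq_neg_one_pow_mul (hr : ∀ x, ¬ r x x) (hf : HasFirstVertexExpansion r f s) :
    f s = (-1) ^ #{p ∈ s ×ˢ s | r p.1 p.2} * f s := by
  induction s using Finset.strongInduction with
  | H s ih =>
  rcases s.eq_empty_or_nonempty with rfl | hs
  · simp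
  have hsq : ∀ n : ℕ, (-1 : R) ^ (2 * n) = 1 := fun n => by rw [pow_mul, neg_one_sq, one_pow]
  calc f s = ∑ v ∈ s, (-1) ^ #{p ∈ s ×ˢ s | r p.1 p.2} *
        ((-1) ^ #{w ∈ s | r v w} * f (s.erase v)) := by
        rw [hf s subset_rfl hs]
        refine sum_congr rfl fun v hv => ?_
        conv_lhs => rw [ih _ (erase_ssubset hv) (hf.mono (erase_subset _ _))]
        rw [card_filter_product_self_eq_erase_add hr hv]
        linear_combination (-((-1 : R) ^ #{w ∈ s | r w v} *
          (-1) ^ #{p ∈ s.erase v ×ˢ s.erase v | r p.1 p.2} * f (s.erase v))) *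
          hsq (#{w ∈ s | r v w})
    _ = _ := by rw [← mul_sum, ← hf.eq_sum_last hs]

lemma eq_zero_of_odd [IsAddTorsionFree R] (hr : ∀ x, ¬ r x x)
    (hf : HasFirstVertexExpansion r f s) (hodd : Odd #{p ∈ s ×ˢ s | r p.1 p.2}) : f s = 0 := by
  have h := hf.eq_neg_one_pow_mul hr
  rwa [hodd.neg_one_pow, neg_one_mul, self_eq_neg] at h

end HasFirstVertexExpansion

end VertexExpansion

namespace DiGraph

variable {G X T : DiGraph} {s t B C : Finset ℕ} {P Q : Finset (Finset ℕ)} {v x y : ℕ}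
  {a : DiGraph → ℚ}

lemma ext_of_iff (hv : G.verts = X.verts) (hE : ∀ i j, G.E i j ↔ X.E i j) : G = X := by
  cases G; cases X
  simp only at hv hE
  rw [hv, funext₂ fun i j => propext (hE i j)]

@[simp] lemma induce_verts (G : DiGraph) (s : Finset ℕ) : (G.induce s).verts = s := rfl

@[simp] lemma induce_E (G : DiGraph) (s : Finset ℕ) (i j : ℕ) :
    (G.induce s).E i j ↔ G.E i j ∧ i ∈ s ∧ j ∈ s := Iff.rfl

lemma induce_induce (G : DiGraph) (h : t ⊆ s) : (G.induce s).induce t = G.induce t :=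
  ext_of_iff rfl fun i j => by
    simp only [induce]
    exact ⟨fun h' => ⟨h'.1.1, h'.2⟩, fun h' => ⟨⟨h'.1, h h'.2.1, h h'.2.2⟩, h'.2⟩⟩

lemma induce_delV (G : DiGraph) (s : Finset ℕ) (v : ℕ) :
    (G.induce s).delV v = G.induce (s.erase v) :=
  ext_of_iff rfl fun i j => by simp only [induce, delV, mem_erase]; tauto

lemma induce_self (hG : ∀ i j, G.E i j → i ∈ G.verts ∧ j ∈ G.verts) :
    G.induce G.verts = G :=
  ext_of_iff rfl fun i j => ⟨And.left, fun h => ⟨h, hG i j h⟩⟩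

lemma induce_E_or {i j : ℕ} :
    (G.induce s).E i j ∨ (G.induce s).E j i ↔
      (G.E i j ∨ G.E j i) ∧ i ∈ s ∧ j ∈ s := by
  simp only [induce]; tauto

lemma inDeg_induce (hv : v ∈ s) : (G.induce s).inDeg v = #{w ∈ s | G.E w v} := by
  simp only [inDeg, induce, hv, and_true]
  exact congrArg card (filter_congr fun w hw => and_iff_left hw)

def induceHom (X : DiGraph) (hs : s ⊆ X.verts) : (X.induce s).symGraph →g X.symGraph where
  toFun y := ⟨y.1, hs y.2⟩
  map_rel' := fun ⟨hE, hne⟩ =>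
    ⟨hE.imp And.left And.left, fun h => hne (Subtype.ext (congrArg Subtype.val h :))⟩

lemma induceHom_injective (hs : s ⊆ X.verts) : Function.Injective (X.induceHom hs) :=
  fun _ _ h => Subtype.ext (congrArg Subtype.val h :)

lemma IsOTree.induce (hG : G.IsOTree) (hs : s ⊆ G.verts)
    (hc : (G.induce s).symGraph.Connected) : (G.induce s).IsOTree :=
  ⟨fun _ _ h => h.2, fun i j h h' => hG.2.1 i j h.1 h'.1, hc,
    hG.2.2.isAcyclic.comap _ (induceHom_injective hs)⟩

def IsPartition (s : Finset ℕ) (P : Finset (Finset ℕ)) : Prop :=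
  (∀ B ∈ P, B.Nonempty) ∧ (∀ B ∈ P, ∀ C ∈ P, B ≠ C → Disjoint B C) ∧
    P.biUnion id = s

lemma IsDecomp.isPartition (hP : G.IsDecomp P) : IsPartition G.verts P :=
  ⟨hP.1, hP.2.1, hP.2.2.1⟩

namespace IsPartition

lemma subset (hP : IsPartition s P) (hB : B ∈ P) : B ⊆ s :=
  hP.2.2 ▸ subset_biUnion_of_mem id hB

lemma exists_mem (hP : IsPartition s P) (hx : x ∈ s) : ∃ B ∈ P, x ∈ B := by
  rw [← hP.2.2, mem_biUnion] at hx
  exact hx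

lemma eq_of_mem (hP : IsPartition s P) (hB : B ∈ P) (hC : C ∈ P) (hxB : x ∈ B)
    (hxC : x ∈ C) : B = C :=
  by_contra fun h => disjoint_left.1 (hP.2.1 B hB C hC h) hxB hxC

lemma sum_eq {M : Type*} [AddCommMonoid M] (hP : IsPartition s P) (f : ℕ → M) :
    ∑ x ∈ s, f x = ∑ B ∈ P, ∑ x ∈ B, f x := by
  rw [← hP.2.2, sum_biUnion (t := id) fun B hB C hC h => hP.2.1 B hB C hC h]
  rfl

lemma sum_card (hP : IsPartition s P) : ∑ B ∈ P, #B = #s := by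
  simp only [card_eq_sum_ones, hP.sum_eq fun _ => 1]

lemma sup_mem (hP : IsPartition s P) (hB : B ∈ P) : B.sup id ∈ B := by
  obtain ⟨y, hy, hsup⟩ := exists_mem_eq_sup B (hP.1 B hB) id
  exact hsup ▸ hy

lemma eq_of_sup_eq (hP : IsPartition s P) (hB : B ∈ P) (hC : C ∈ P) (h : B.sup id = C.sup id) :
    B = C :=
  hP.eq_of_mem hB hC (hP.sup_mem hB) (h ▸ hP.sup_mem hC)

lemma even_card (hP : IsPartition s P) (hs : Even #s) (hodd : ∀ B ∈ P, Odd #B) : Even #P := by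
  rwa [← hP.sum_card, even_sum_iff_even_card_odd, filter_true_of_mem hodd] at hs

lemma erase_union (hP : IsPartition s P) (hC : C ∈ P) (hv : v ∈ C)
    (hQ : IsPartition (C.erase v) Q) : IsPartition (s.erase v) (P.erase C ∪ Q) := by
  have hQC : ∀ B ∈ Q, B ⊆ C := fun B hB => (hQ.subset hB).trans (erase_subset _ _)
  have hdisjC : ∀ B ∈ P.erase C, Disjoint B C := fun B hB =>
    hP.2.1 B (mem_of_mem_erase hB) C hC (ne_of_mem_erase hB)
  refine ⟨fun B hB => ?_, fun B hB B' hB' hne => ?_, ?_⟩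
  · rcases mem_union.1 hB with hB | hB
    exacts [hP.1 B (mem_of_mem_erase hB), hQ.1 B hB]
  · have key : ∀ B ∈ P.erase C, ∀ B' ∈ Q, Disjoint B B' := fun B hB B' hB' =>
      (hdisjC B hB).mono_right (hQC B' hB')
    rcases mem_union.1 hB with hB | hB <;> rcases mem_union.1 hB' with hB' | hB'
    exacts [hP.2.1 B (mem_of_mem_erase hB) B' (mem_of_mem_erase hB') hne, key B hB B' hB',
      (key B' hB' B hB).symm, hQ.2.1 B hB B' hB' hne]
  · ext x
    rw [mem_biUnion]
    constructor
    · rintro ⟨B, hB, hxB⟩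
      rcases mem_union.1 hB with hB | hB
      · exact mem_erase.2 ⟨fun h => disjoint_left.1 (hdisjC B hB) hxB (h ▸ hv),
          hP.subset (mem_of_mem_erase hB) hxB⟩
      · exact erase_subset_erase _ (hP.subset hC) (hQ.subset hB hxB)
    · intro hx
      obtain ⟨B, hB, hxB⟩ := hP.exists_mem (mem_of_mem_erase hx)
      by_cases hBC : B = C
      · obtain ⟨B', hB', hxB'⟩ :=
          hQ.exists_mem (mem_erase.2 ⟨ne_of_mem_erase hx, hBC ▸ hxB⟩)
        exact ⟨B', mem_union_right _ hB', hxB'⟩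
      · exact ⟨B, mem_union_left _ (mem_erase.2 ⟨hBC, hB⟩), hxB⟩

end IsPartition

lemma mem_compVerts {c : X.symGraph.ConnectedComponent} :
    x ∈ X.compVerts c ↔
      ∃ h : x ∈ X.verts, X.symGraph.connectedComponentMk ⟨x, h⟩ = c := by
  simp only [compVerts, mem_filter, and_iff_right_iff_imp]
  exact fun h => h.1

lemma compVerts_injective : Function.Injective X.compVerts := by
  intro c d h
  obtain ⟨⟨y, hy⟩, rfl⟩ := c.exists_rep
  exact (mem_compVerts.1 (h ▸ mem_compVerts.2 ⟨hy, rfl⟩ : y ∈ X.compVerts d)).2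

noncomputable def comps (X : DiGraph) : Finset (Finset ℕ) := univ.image X.compVerts

lemma finprod_component {M : Type*} [CommMonoid M] (f : DiGraph → M) :
    ∏ᶠ c, f (X.component c) = ∏ B ∈ X.comps, f (X.induce B) := by
  rw [finprod_eq_prod_of_fintype, comps, prod_image fun c _ d _ h => compVerts_injective h]
  rfl

structure IsComponentPartition (X : DiGraph) (P : Finset (Finset ℕ)) : Prop where
  isPartition : IsPartition X.verts P
  connected : ∀ B ∈ P, (X.induce B).symGraph.Connected
  closed : ∀ B ∈ P, ∀ i ∈ B, ∀ j ∈ X.verts, X.E i j ∨ X.E j i → j ∈ B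

lemma connected_induce_compVerts (c : X.symGraph.ConnectedComponent) :
    (X.induce (X.compVerts c)).symGraph.Connected := by
  refine c.connected_toSimpleGraph.map
    ⟨fun y => ⟨y.1.1, mem_compVerts.2 ⟨y.1.2, y.2⟩⟩, fun {y z} hyz => ?_⟩ ?_
  · have hy : y.1.1 ∈ X.compVerts c := mem_compVerts.2 ⟨y.1.2, y.2⟩
    have hz : z.1.1 ∈ X.compVerts c := mem_compVerts.2 ⟨z.1.2, z.2⟩
    exact ⟨hyz.1.imp (⟨·, hy, hz⟩) (⟨·, hz, hy⟩),
      fun h => hyz.2 (Subtype.ext (congrArg Subtype.val h :))⟩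
  · rintro ⟨y, hy⟩
    obtain ⟨hy', hc⟩ := mem_compVerts.1 hy
    exact ⟨⟨⟨y, hy'⟩, hc⟩, rfl⟩

lemma isComponentPartition_comps (X : DiGraph) : X.IsComponentPartition X.comps := by
  refine ⟨⟨?_, ?_, ?_⟩, ?_, ?_⟩
  · simp only [comps, mem_image, mem_univ, true_and, forall_exists_index, forall_apply_eq_imp_iff]
    intro c
    obtain ⟨⟨y, hy⟩, rfl⟩ := c.exists_rep
    exact ⟨y, mem_compVerts.2 ⟨hy, rfl⟩⟩
  · simp only [comps, mem_image, mem_univ, true_and, forall_exists_index, forall_apply_eq_imp_iff]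
    intro c d hcd
    refine disjoint_left.2 fun y hc hd => hcd ?_
    obtain ⟨hy, rfl⟩ := mem_compVerts.1 hc
    obtain ⟨-, rfl⟩ := mem_compVerts.1 hd
    rfl
  · ext y
    simp only [comps, mem_biUnion, mem_image, mem_univ, true_and, id, exists_exists_eq_and,
      mem_compVerts]
    exact ⟨fun ⟨_, hy, _⟩ => hy, fun hy => ⟨_, hy, rfl⟩⟩
  · simp only [comps, mem_image, mem_univ, true_and, forall_exists_index, forall_apply_eq_imp_iff]
    exact connected_induce_compVerts
  · simp only [comps, mem_image, mem_univ, true_and, forall_exists_index, forall_apply_eq_imp_iff]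
    intro c i hi j hj hij
    obtain ⟨hi', rfl⟩ := mem_compVerts.1 hi
    by_cases h : i = j
    · exact h ▸ hi
    · refine mem_compVerts.2
        ⟨hj, SimpleGraph.ConnectedComponent.sound (SimpleGraph.Adj.reachable ?_)⟩
      exact ⟨hij.symm, fun h' => h (congrArg Subtype.val h').symm⟩

lemma subset_of_mem_comps (hB : B ∈ X.comps) : B ⊆ X.verts :=
  (isComponentPartition_comps X).isPartition.subset hB

namespace IsComponentPartition

lemma mem_of_reachable (hP : X.IsComponentPartition P) (hB : B ∈ P)
    {y z : {y // y ∈ X.verts}} (h : X.symGraph.Reachable y z) (hy : y.1 ∈ B) : z.1 ∈ B := by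
  rw [SimpleGraph.reachable_iff_reflTransGen] at h
  induction h with
  | refl => exact hy
  | tail _ hadj ih => exact hP.closed B hB _ ih _ (Subtype.property _) hadj.1

lemma eq_compVerts (hP : X.IsComponentPartition P) (hB : B ∈ P) (hx : x ∈ B) :
    B = X.compVerts (X.symGraph.connectedComponentMk ⟨x, hP.isPartition.subset hB hx⟩) := by
  ext y
  rw [mem_compVerts]
  constructor
  · intro hy
    refine ⟨hP.isPartition.subset hB hy, SimpleGraph.ConnectedComponent.sound ?_⟩
    exact ((hP.connected B hB).preconnected ⟨y, hy⟩ ⟨x, hx⟩).map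
      (X.induceHom (hP.isPartition.subset hB))
  · rintro ⟨hy, hyx⟩
    exact hP.mem_of_reachable hB (SimpleGraph.ConnectedComponent.exact hyx).symm hx

lemma eq_comps (hP : X.IsComponentPartition P) : P = X.comps := by
  ext B
  constructor
  · intro hB
    obtain ⟨x, hx⟩ := hP.isPartition.1 B hB
    rw [hP.eq_compVerts hB hx]
    exact mem_image_of_mem _ (mem_univ _)
  · intro hB
    obtain ⟨c, -, rfl⟩ := mem_image.1 hB
    obtain ⟨⟨x, hx⟩, rfl⟩ := c.exists_rep
    obtain ⟨B', hB', hxB'⟩ := hP.isPartition.exists_mem hx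
    rwa [hP.eq_compVerts hB' hxB'] at hB'

lemma connected_induce (hP : (G.induce s).IsComponentPartition P) (hB : B ∈ P) :
    (G.induce B).symGraph.Connected := by
  have := hP.connected B hB
  rwa [induce_induce (s := s) _ (hP.isPartition.subset hB)] at this

lemma filter_E_eq (hP : (G.induce s).IsComponentPartition P) (hC : C ∈ P) (hv : v ∈ C) :
    {w ∈ s | G.E w v} = {w ∈ C | G.E w v} := by
  have hCs := hP.isPartition.subset hC
  ext w
  simp only [mem_filter]
  refine ⟨fun ⟨hw, hE⟩ =>
    ⟨hP.closed C hC v hv w hw (induce_E_or.2 ⟨.inr hE, hCs hv, hw⟩), hE⟩,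
    fun ⟨hw, hE⟩ => ⟨hCs hw, hE⟩⟩

lemma erase (hP : (G.induce s).IsComponentPartition P) (hC : C ∈ P) (hv : v ∈ C)
    (hQ : (G.induce (C.erase v)).IsComponentPartition Q) :
    (G.induce (s.erase v)).IsComponentPartition (P.erase C ∪ Q) := by
  have hPQ : IsPartition (s.erase v) (P.erase C ∪ Q) :=
    hP.isPartition.erase_union hC hv hQ.isPartition
  refine ⟨hPQ, fun B hB => ?_, fun B hB i hi j hj hij => ?_⟩
  · rw [induce_induce _ (hPQ.subset hB)]
    rcases mem_union.1 hB with hB | hB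
    exacts [hP.connected_induce (mem_of_mem_erase hB), hQ.connected_induce hB]
  obtain ⟨hE, hi', hj'⟩ := induce_E_or.1 hij
  have hij_s := induce_E_or.2 ⟨hE, mem_of_mem_erase hi', mem_of_mem_erase hj'⟩
  rcases mem_union.1 hB with hB | hB
  · exact hP.closed B (mem_of_mem_erase hB) i hi j (mem_of_mem_erase hj) hij_s
  · have hiC := hQ.isPartition.subset hB hi
    have hjC : j ∈ C.erase v := mem_erase.2 ⟨ne_of_mem_erase hj,
      hP.closed C hC i (mem_of_mem_erase hiC) j (mem_of_mem_erase hj) hij_s⟩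
    exact hQ.closed B hB i hi j hjC (induce_E_or.2 ⟨hE, hiC, hjC⟩)

lemma disjoint_erase_comps (hP : (G.induce s).IsComponentPartition P) (hC : C ∈ P) :
    Disjoint (P.erase C) (G.induce (C.erase v)).comps := by
  refine disjoint_left.2 fun B hB hB' => ?_
  obtain ⟨x, hx⟩ := (isComponentPartition_comps _).isPartition.1 B hB'
  exact disjoint_left.1 (hP.isPartition.2.1 B (mem_of_mem_erase hB) C hC (ne_of_mem_erase hB))
    hx (mem_of_mem_erase (subset_of_mem_comps hB' hx))

end IsComponentPartition

lemma comps_eq_empty (h : X.verts = ∅) : X.comps = ∅ :=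
  (IsComponentPartition.eq_comps (X := X) (P := ∅)
    ⟨⟨by simp, by simp, by simp [h]⟩, by simp, by simp⟩).symm

lemma IsOTree.comps_eq (hT : T.IsOTree) : T.comps = {T.verts} := by
  refine (IsComponentPartition.eq_comps ⟨⟨?_, by simp, by simp⟩, ?_, ?_⟩).symm
  · obtain ⟨⟨y, hy⟩⟩ := hT.2.2.connected.nonempty
    simpa using ⟨y, hy⟩
  · simp only [mem_singleton, forall_eq]
    rw [induce_self hT.1]
    exact hT.2.2.connected
  · simp only [mem_singleton, forall_eq]
    exact fun _ _ j hj _ => hj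

lemma comps_induce_erase (hC : C ∈ (G.induce s).comps) (hv : v ∈ C) :
    (G.induce (s.erase v)).comps = (G.induce s).comps.erase C ∪ (G.induce (C.erase v)).comps :=
  ((isComponentPartition_comps _).erase hC hv (isComponentPartition_comps _)).eq_comps.symm

noncomputable def arcs (X : DiGraph) : Finset (ℕ × ℕ) :=
  {p ∈ X.verts ×ˢ X.verts | X.E p.1 p.2}

lemma mem_arcs {p : ℕ × ℕ} :
    p ∈ X.arcs ↔ p.1 ∈ X.verts ∧ p.2 ∈ X.verts ∧ X.E p.1 p.2 := by
  rw [arcs, mem_filter, mem_product, and_assoc]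

lemma natCard_edgeSet_symGraph (hloop : ∀ i, ¬ X.E i i) :
    Nat.card X.symGraph.edgeSet = #(X.arcs.image fun p => s(p.1, p.2)) := by
  rw [← Nat.card_image_of_injective (Sym2.map.injective Subtype.val_injective),
    ← Nat.card_eq_finsetCard]
  congr 2
  ext e
  induction e using Sym2.ind with
  | _ i j =>
  simp only [Set.mem_image, coe_image, arcs, coe_filter, mem_product, Set.mem_ofPred_eq]
  constructor
  · rintro ⟨e, he, hij⟩
    induction e using Sym2.ind with
    | _ x y =>
    obtain ⟨hxy | hyx, -⟩ := he
    · exact ⟨(x.1, y.1), ⟨⟨x.2, y.2⟩, hxy⟩, hij⟩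
    · exact ⟨(y.1, x.1), ⟨⟨y.2, x.2⟩, hyx⟩, Sym2.eq_swap.trans hij⟩
  · rintro ⟨p, ⟨⟨h1, h2⟩, hp⟩, hij⟩
    refine ⟨s(⟨p.1, h1⟩, ⟨p.2, h2⟩), ⟨.inl hp, fun h => ?_⟩, hij⟩
    rw [show p.1 = p.2 from congrArg Subtype.val h] at hp
    exact hloop _ hp

lemma natCard_edgeSet_symGraph_eq_iff (hX : ∀ i j, X.E i j → i ∈ X.verts ∧ j ∈ X.verts)
    (hloop : ∀ i, ¬ X.E i i) :
    Nat.card X.symGraph.edgeSet = #X.arcs ↔ ∀ i j, X.E i j → ¬ X.E j i := by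
  have hmem : ∀ {i j}, X.E i j → (i, j) ∈ X.arcs := fun h => by
    simpa [arcs] using ⟨hX _ _ h, h⟩
  rw [natCard_edgeSet_symGraph hloop, card_image_iff]
  constructor
  · intro h i j hij hji
    obtain rfl : i = j := congrArg Prod.fst (h (hmem hij) (hmem hji) Sym2.eq_swap)
    exact hloop i hij
  · intro h p hp q hq hpq
    simp only [arcs, coe_filter, Set.mem_ofPred_eq] at hp hq
    rcases Sym2.eq_iff.1 hpq with ⟨h1, h2⟩ | ⟨h1, h2⟩
    · exact Prod.ext h1 h2
    · exact (h _ _ hq.2 (h1 ▸ h2 ▸ hp.2)).elim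

lemma IsOTree.card_arcs_add_one (hT : T.IsOTree) : #T.arcs + 1 = #T.verts := by
  have hloop : ∀ i, ¬ T.E i i := fun i h => hT.2.1 i i h h
  have := (SimpleGraph.isTree_iff_connected_and_card.1 hT.2.2).2
  rwa [(natCard_edgeSet_symGraph_eq_iff hT.1 hloop).2 hT.2.1, Nat.card_eq_finsetCard] at this

lemma ARec.sum_delV_eq_card_mul (ha : ARec a) (hT : T.IsOTree) :
    ∑ v ∈ T.verts, (-1 : ℚ) ^ T.inDeg v *
      ∏ B ∈ (T.delV v).comps, a ((T.delV v).induce B) = #T.verts * a T := by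
  obtain ⟨x⟩ := hT.2.2.connected.nonempty
  rcases (one_le_card.2 ⟨x.1, x.2⟩).eq_or_lt with h1 | h2
  · obtain ⟨w, hw⟩ := card_eq_one.1 h1.symm
    have hdeg : T.inDeg w = 0 := card_eq_zero.2 <| filter_eq_empty_iff.2 fun u hu hE => by
      rw [hw, mem_singleton] at hu
      exact hT.2.1 u w hE (hu ▸ hE)
    rw [hw, sum_singleton, hdeg, comps_eq_empty (by simp [delV, hw]), prod_empty,
      ha.1 T hT h1.symm]
    simp
  · rw [ha.2 T hT h2, ← mul_assoc, mul_one_div_cancel (Nat.cast_ne_zero.2 (by omega)), one_mul]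
    simp only [finprod_component]

lemma ARec.sum_induce_erase_eq_card_mul (ha : ARec a) (hG : G.IsOTree) (hs : s ⊆ G.verts)
    (hC : C ∈ (G.induce s).comps) :
    ∑ v ∈ C, (-1 : ℚ) ^ #{w ∈ C | G.E w v} *
      ∏ B ∈ (G.induce (C.erase v)).comps, a (G.induce B) = #C * a (G.induce C) := by
  have hCs := subset_of_mem_comps hC
  have hCT : (G.induce C).IsOTree :=
    hG.induce (hCs.trans hs) ((isComponentPartition_comps _).connected_induce hC)
  refine Eq.trans (sum_congr rfl fun v hv => ?_) (ha.sum_delV_eq_card_mul hCT)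
  rw [inDeg_induce hv, induce_delV]
  exact congrArg _ (prod_congr rfl fun B hB => by
    rw [induce_induce (s := C.erase v) _ (subset_of_mem_comps hB)])

noncomputable def forestWeight (a : DiGraph → ℚ) (G : DiGraph) (s : Finset ℕ) : ℚ :=
  (#s)! * ∏ B ∈ (G.induce s).comps, a (G.induce B)

lemma forestWeight_hasFirstVertexExpansion (ha : ARec a) (hG : G.IsOTree) :
    HasFirstVertexExpansion G.E (forestWeight a G) G.verts := by
  intro s hs hne
  set P := (G.induce s).comps
  have hP := isComponentPartition_comps (G.induce s)
  have hfact : ((#s)! : ℚ) = (#s - 1)! * ∑ C ∈ P, (#C : ℚ) := by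
    rw [← Nat.cast_sum, hP.isPartition.sum_card, induce_verts,
      ← Nat.mul_factorial_pred hne.card_pos.ne']
    push_cast
    ring
  calc forestWeight a G s
      = (#s - 1)! * ∑ C ∈ P, (∏ B ∈ P.erase C, a (G.induce B)) * ∑ v ∈ C,
          (-1 : ℚ) ^ #{w ∈ C | G.E w v} *
            ∏ B ∈ (G.induce (C.erase v)).comps, a (G.induce B) := by
        rw [forestWeight, hfact, mul_assoc, sum_mul]
        congr 1
        refine sum_congr rfl fun C hC => ?_
        rw [ha.sum_induce_erase_eq_card_mul hG hs hC, ← mul_prod_erase P _ hC]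
        ring
    _ = ∑ C ∈ P, ∑ v ∈ C, (-1) ^ #{w ∈ s | G.E w v} * forestWeight a G (s.erase v) := by
        rw [mul_sum]
        refine sum_congr rfl fun C hC => ?_
        rw [mul_sum, mul_sum]
        refine sum_congr rfl fun v hv => ?_
        rw [forestWeight, card_erase_of_mem (s := s) (hP.isPartition.subset hC hv),
          comps_induce_erase hC hv,
          prod_union (hP.disjoint_erase_comps hC), hP.filter_E_eq hC hv]
        ring
    _ = _ := (hP.isPartition.sum_eq _).symm

lemma ARec.eq_zero_of_even (ha : ARec a) (hT : T.IsOTree) (heven : Even #T.verts) : a T = 0 := by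
  have hodd : Odd #T.arcs := by
    have := hT.card_arcs_add_one
    obtain ⟨k, hk⟩ := heven
    exact ⟨k - 1, by omega⟩
  have h := (forestWeight_hasFirstVertexExpansion ha hT).eq_zero_of_odd
    (fun i h => hT.2.1 i i h h) hodd
  rw [forestWeight, induce_self hT.1, hT.comps_eq, prod_singleton, induce_self hT.1] at h
  simpa [Nat.factorial_ne_zero] using h

/-- The vertex of `G.quotGraph P` into which `x` is collapsed. -/
noncomputable def collapse (P : Finset (Finset ℕ)) (x : ℕ) : ℕ :=
  ((P.filter (x ∈ ·)).biUnion id).sup id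

lemma IsPartition.collapse_eq (hP : IsPartition s P) (hB : B ∈ P) (hx : x ∈ B) :
    collapse P x = B.sup id := by
  have : P.filter (x ∈ ·) = {B} := by
    ext C
    simp only [mem_filter, mem_singleton]
    exact ⟨fun ⟨hC, hxC⟩ => hP.eq_of_mem hC hB hxC hx, fun h => h ▸ ⟨hB, hx⟩⟩
  rw [collapse, this, singleton_biUnion]
  rfl

lemma card_verts_quotGraph (hP : IsPartition G.verts P) : #(G.quotGraph P).verts = #P :=
  card_image_of_injOn fun _ hB _ hC h => hP.eq_of_sup_eq hB hC h

lemma collapse_mem_verts_quotGraph (hP : IsPartition G.verts P) (hx : x ∈ G.verts) :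
    collapse P x ∈ (G.quotGraph P).verts := by
  obtain ⟨B, hB, hxB⟩ := hP.exists_mem hx
  rw [hP.collapse_eq hB hxB]
  exact mem_image_of_mem _ hB

lemma quotGraph_E_collapse (hP : IsPartition G.verts P) (hx : x ∈ G.verts) (hy : y ∈ G.verts)
    (hE : G.E x y) (hne : collapse P x ≠ collapse P y) :
    (G.quotGraph P).E (collapse P x) (collapse P y) := by
  obtain ⟨B, hB, hxB⟩ := hP.exists_mem hx
  obtain ⟨C, hC, hyC⟩ := hP.exists_mem hy
  rw [hP.collapse_eq hB hxB, hP.collapse_eq hC hyC] at hne ⊢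
  exact ⟨hne, B, hB, C, hC, rfl, rfl, x, hxB, y, hyC, hE⟩

lemma quotGraph_connected (hG : G.symGraph.Connected) (hP : IsPartition G.verts P) :
    (G.quotGraph P).symGraph.Connected := by
  let f : {x // x ∈ G.verts} → {b // b ∈ (G.quotGraph P).verts} :=
    fun x => ⟨collapse P x, collapse_mem_verts_quotGraph hP x.2⟩
  have hf : ∀ x y, G.symGraph.Reachable x y →
      (G.quotGraph P).symGraph.Reachable (f x) (f y) := by
    intro x y h
    rw [SimpleGraph.reachable_iff_reflTransGen] at h ⊢
    refine Relation.ReflTransGen.lift' f (fun x y hxy => ?_) _ _ h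
    by_cases heq : collapse P x = collapse P y
    · show Relation.ReflTransGen _ (f x) (f y)
      rw [show f x = f y from Subtype.ext heq]
    · exact .single ⟨hxy.1.imp (quotGraph_E_collapse hP x.2 y.2 · heq)
        (quotGraph_E_collapse hP y.2 x.2 · (Ne.symm heq)), fun h => heq (congrArg Subtype.val h)⟩
  have hsurj : Function.Surjective f := by
    rintro ⟨b, hb⟩
    obtain ⟨B, hB, rfl⟩ := mem_image.1 hb
    exact ⟨⟨B.sup id, hP.subset hB (hP.sup_mem hB)⟩,
      Subtype.ext (hP.collapse_eq hB (hP.sup_mem hB))⟩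
  have := hG.nonempty.map f
  refine ⟨fun b c => ?_⟩
  obtain ⟨x, rfl⟩ := hsurj b
  obtain ⟨y, rfl⟩ := hsurj c
  exact hf x y (hG.preconnected x y)

lemma IsPartition.filter_arcs_collapse_eq (hP : IsPartition G.verts P) :
    {p ∈ G.arcs | collapse P p.1 = collapse P p.2} = P.biUnion fun B => (G.induce B).arcs := by
  ext ⟨i, j⟩
  simp only [mem_filter, mem_biUnion, mem_arcs, induce_verts, induce_E]
  constructor
  · rintro ⟨⟨hi, hj, hE⟩, heq⟩
    obtain ⟨B, hB, hiB⟩ := hP.exists_mem hi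
    obtain ⟨C, hC, hjC⟩ := hP.exists_mem hj
    rw [hP.collapse_eq hB hiB, hP.collapse_eq hC hjC] at heq
    obtain rfl := hP.eq_of_sup_eq hB hC heq
    exact ⟨B, hB, hiB, hjC, hE, hiB, hjC⟩
  · rintro ⟨B, hB, hiB, hjB, hE, -⟩
    exact ⟨⟨hP.subset hB hiB, hP.subset hB hjB, hE⟩,
      by rw [hP.collapse_eq hB hiB, hP.collapse_eq hB hjB]⟩

noncomputable def crossArcs (G : DiGraph) (P : Finset (Finset ℕ)) : Finset (ℕ × ℕ) :=
  {p ∈ G.arcs | collapse P p.1 ≠ collapse P p.2}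

/-- Every block is a tree, so it accounts for one more vertex than arcs. -/
lemma IsDecomp.card_crossArcs_add_one (hG : G.IsOTree) (hP : G.IsDecomp P) :
    #(G.crossArcs P) + 1 = #P := by
  have hPp := hP.isPartition
  have hinner : #{p ∈ G.arcs | collapse P p.1 = collapse P p.2} + #P = #G.verts := by
    rw [hPp.filter_arcs_collapse_eq, card_biUnion (t := fun B => (G.induce B).arcs)
        fun B hB C hC hBC => disjoint_left.2 fun p hpB hpC =>
          hBC (hPp.eq_of_mem hB hC (mem_arcs.1 hpB).1 (mem_arcs.1 hpC).1),
      ← hPp.sum_card, card_eq_sum_ones P, ← sum_add_distrib]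
    exact sum_congr rfl fun B hB => (hP.2.2.2 B hB).card_arcs_add_one
  have hsplit : #{p ∈ G.arcs | collapse P p.1 = collapse P p.2} + #(G.crossArcs P) =
      #G.arcs :=
    card_filter_add_card_filter_not _
  have harcs := hG.card_arcs_add_one
  have hPne : 0 < #P := by
    obtain ⟨⟨x, hx⟩⟩ := hG.2.2.connected.nonempty
    obtain ⟨B, hB, -⟩ := hPp.exists_mem hx
    exact card_pos.2 ⟨B, hB⟩
  omega

lemma card_arcs_quotGraph_le (hP : IsPartition G.verts P) :
    #(G.quotGraph P).arcs ≤ #(G.crossArcs P) := by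
  refine (card_le_card fun q hq => ?_).trans
    (card_image_le (f := fun p => (collapse P p.1, collapse P p.2)))
  obtain ⟨hne, B, hB, C, hC, hq1, hq2, i, hi, j, hj, hE⟩ := (mem_filter.1 hq).2
  rw [← hP.collapse_eq hB hi] at hq1
  rw [← hP.collapse_eq hC hj] at hq2
  refine mem_image.2 ⟨(i, j), mem_filter.2 ⟨?_, hq1 ▸ hq2 ▸ hne⟩, Prod.ext hq1 hq2⟩
  exact mem_arcs.2 ⟨hP.subset hB hi, hP.subset hC hj, hE⟩

/-- Connected with `#P - 1` edges, and as many arcs as edges. -/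
lemma IsDecomp.quotGraph_isOTree (hG : G.IsOTree) (hP : G.IsDecomp P) :
    (G.quotGraph P).IsOTree := by
  have hQ : ∀ i j, (G.quotGraph P).E i j →
      i ∈ (G.quotGraph P).verts ∧ j ∈ (G.quotGraph P).verts := by
    rintro _ _ ⟨-, B, hB, C, hC, rfl, rfl, -⟩
    exact ⟨mem_image_of_mem _ hB, mem_image_of_mem _ hC⟩
  have hloop : ∀ i, ¬ (G.quotGraph P).E i i := fun _ h => h.1 rfl
  have hconn := quotGraph_connected hG.2.2.connected hP.isPartition
  have hlow := hconn.card_vert_le_card_edgeSet_add_one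
  rw [Nat.card_eq_finsetCard, card_verts_quotGraph hP.isPartition] at hlow
  have hle := (natCard_edgeSet_symGraph hloop).trans_le card_image_le
  have hcross := card_arcs_quotGraph_le hP.isPartition
  have hcount := hP.card_crossArcs_add_one hG
  refine ⟨hQ, (natCard_edgeSet_symGraph_eq_iff hQ hloop).1 (by omega),
    SimpleGraph.isTree_iff_connected_and_card.2 ⟨hconn, ?_⟩⟩
  rw [Nat.card_eq_finsetCard, card_verts_quotGraph hP.isPartition]
  omega

end DiGraph

/-- The coefficients `e_T` defined by the collapse recursion
`e_T = − Σ_{m=1}^{n_T−1} Σ_{∪ₖ Tₖ ≃ T} e_{T/{Tₖ}} ∏ₖ a_{Tₖ}`, `e_• = 1`, where the `a_T`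
satisfy their defining recursion, vanish for every tree with an even number of
vertices. -/
theorem eT_vanishes_for_even_trees (a e : DiGraph → ℚ)
    (ha : DiGraph.ARec a) (he : DiGraph.ERec a e) :
    ∀ G : DiGraph, G.IsOTree → Even G.verts.card → e G = 0 := by
  intro G hG heven
  obtain ⟨n, hn⟩ : ∃ n, #G.verts = n := ⟨_, rfl⟩
  induction n using Nat.strong_induction_on generalizing G with
  | _ n ih =>
  have h2 : 2 ≤ #G.verts := by
    obtain ⟨⟨x, hx⟩⟩ := hG.2.2.connected.nonempty
    obtain ⟨k, hk⟩ := heven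
    have := card_pos.2 ⟨x, hx⟩
    omega
  rw [he.2 G hG h2, neg_eq_zero]
  refine sum_eq_zero fun P hP => ?_
  obtain ⟨hdec, hlt⟩ := (mem_filter.1 hP).2
  by_cases hodd : ∀ B ∈ P, Odd #B
  · have hcard := DiGraph.card_verts_quotGraph hdec.isPartition
    rw [ih #P (hn ▸ hlt) _ (hdec.quotGraph_isOTree hG)
      (hcard ▸ hdec.isPartition.even_card heven hodd) hcard, zero_mul]
  · push Not at hodd
    obtain ⟨B, hB, hBeven⟩ := hodd
    rw [prod_eq_zero hB (ha.eq_zero_of_even (hdec.2.2.2 B hB) (Nat.not_odd_iff_even.1 hBeven)),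
      mul_zero]
end
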